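/- arXiv:1512.02623 — 5 statements merged into one kernel-verified Lean document; each statement's English description precedes it below -/
import Mathlib

section
/- Let X be a complex Banach space and T a bounded linear operator on X. Then T is left generalized Drazin invertible if and only if T admits a generalized Kato decomposition GKD(M,N) and the quasinilpotent part H₀(T) is closed. -/
/-!
Given a left generalized Drazin decomposition `X = M ⊕ H₀(T)`, the pair `(M, H₀(T))` is a
generalized Kato decomposition: `T|_M` is semi-regular because `ker Tⁿ ⊆ H₀(T)` meets `M` only
in `0`, and `T` is quasinilpotent on the closed subspace `H₀(T)` by the uniform boundedness
principle applied to the family `cⁿ Tⁿ`.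

Conversely, let `(M, N)` be a generalized Kato decomposition with `H₀(T)` closed. Quasinilpotence
of `T|_N` gives `N ⊆ H₀(T)`, so `X = M + H₀(T)`, and it remains to see that
`M ∩ H₀(T) = H₀(T|_M)` is zero. For a semi-regular `A` with closed `H₀(A)`, the open mapping
theorem lifts any `u ∈ ker A` along `A` to `wⱼ` with `Aʲ wⱼ = u` and `‖wⱼ‖ ≤ Cʲ ‖u‖`; these
`wⱼ` lie in `H₀(A)`, on which `A` is quasinilpotent, so `‖u‖ ≤ Cʲ ‖(A|_{H₀(A)})ʲ‖ ‖u‖ → 0`.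
Hence `A` is injective with closed range, i.e. bounded below, and then `H₀(A) = 0`.
-/

open Filter Topology Set

namespace Paper

variable {Y : Type*} [NormedAddCommGroup Y] [NormedSpace ℂ Y]

/-- A bounded operator `A` is quasinilpotent if `‖Aⁿ‖^(1/n) → 0`. -/
def IsQuasinilpotent (A : Y →L[ℂ] Y) : Prop :=
  Tendsto (fun n : ℕ => ‖A ^ n‖ ^ (1 / (n : ℝ))) atTop (nhds (0 : ℝ))

/-- `A` is semi-regular if its range is closed and `ker (Aⁿ) ⊆ ran A` for all `n`. -/
def SemiRegular (A : Y →L[ℂ] Y) : Prop :=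
  IsClosed (Set.range A) ∧ ∀ n : ℕ, ∀ x : Y, (A ^ n) x = 0 → x ∈ Set.range A

/-- `A` has the single-valued extension property at `l0`. -/
def HasSVEPAt (A : Y →L[ℂ] Y) (l0 : ℂ) : Prop :=
  ∀ U : Set ℂ, IsOpen U → l0 ∈ U → ∀ f : ℂ → Y, AnalyticOnNhd ℂ f U →
    (∀ l ∈ U, l • f l - A (f l) = 0) → ∀ l ∈ U, f l = 0

/-- `A` has the single-valued extension property (at every point). -/
def HasSVEP (A : Y →L[ℂ] Y) : Prop := ∀ l : ℂ, HasSVEPAt A l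

/-- `A` is bounded below: injective with closed range. -/
def BoundedBelow (A : Y →L[ℂ] Y) : Prop :=
  Function.Injective A ∧ IsClosed (Set.range A)

variable {X : Type*} [NormedAddCommGroup X] [NormedSpace ℂ X] [CompleteSpace X]

/-- The quasinilpotent part `H₀(T)` of `T`. -/
def quasinilpotentPart (T : X →L[ℂ] X) : Set X :=
  {x : X | Tendsto (fun n : ℕ => ‖(T ^ n) x‖ ^ (1 / (n : ℝ))) atTop (nhds (0 : ℝ))}

/-- The analytic core `K(T)` of `T`. -/
def analyticCore (T : X →L[ℂ] X) : Set X :=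
  {x : X | ∃ (u : ℕ → X) (δ : ℝ), 0 < δ ∧ T (u 1) = x ∧
    (∀ n : ℕ, 1 ≤ n → T (u (n + 1)) = u n) ∧ (∀ n : ℕ, 1 ≤ n → ‖u n‖ ≤ δ ^ n * ‖x‖)}

/-- Restriction of `T` to an invariant subspace `M`, as a continuous linear operator on `M`. -/
def restrictCLM (T : X →L[ℂ] X) (M : Submodule ℂ X) (h : ∀ x ∈ M, T x ∈ M) : M →L[ℂ] M :=
  { toLinearMap := (T : X →ₗ[ℂ] X).restrict h
    cont := (T.continuous.comp continuous_subtype_val).subtype_mk _ }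

/-- `(M, N)` is a generalized Kato decomposition of `T`. -/
structure IsGKD (T : X →L[ℂ] X) (M N : Submodule ℂ X) : Prop where
  closedM : IsClosed (M : Set X)
  closedN : IsClosed (N : Set X)
  invM : ∀ x ∈ M, T x ∈ M
  invN : ∀ x ∈ N, T x ∈ N
  compl : IsCompl M N
  semiregM : SemiRegular (restrictCLM T M invM)
  quasiN : IsQuasinilpotent (restrictCLM T N invN)

/-- `T` admits a generalized Kato decomposition. -/
def HasGKD (T : X →L[ℂ] X) : Prop := ∃ M N : Submodule ℂ X, IsGKD T M N

/-- `T` is left generalized Drazin invertible. -/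
def LeftGDInvertible (T : X →L[ℂ] X) : Prop :=
  IsClosed (quasinilpotentPart T) ∧
  ∃ M : Submodule ℂ X, IsClosed (M : Set X) ∧ (∀ x ∈ M, T x ∈ M) ∧
    IsClosed (T '' (M : Set X)) ∧
    (M : Set X) ∩ quasinilpotentPart T = {0} ∧
    (∀ x : X, ∃ m ∈ M, ∃ h ∈ quasinilpotentPart T, x = m + h)

/-- `T` is right generalized Drazin invertible. -/
def RightGDInvertible (T : X →L[ℂ] X) : Prop :=
  IsClosed (analyticCore T) ∧
  ∃ N : Submodule ℂ X, IsClosed (N : Set X) ∧ (∀ x ∈ N, T x ∈ N) ∧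
    (N : Set X) ⊆ quasinilpotentPart T ∧
    analyticCore T ∩ (N : Set X) = {0} ∧
    (∀ x : X, ∃ k ∈ analyticCore T, ∃ h ∈ N, x = k + h)

/-- The approximate point spectrum. -/
def sigmaAp (T : X →L[ℂ] X) : Set ℂ :=
  {l : ℂ | ¬ BoundedBelow (l • ContinuousLinearMap.id ℂ X - T)}

/-- The surjective spectrum. -/
def sigmaSu (T : X →L[ℂ] X) : Set ℂ :=
  {l : ℂ | ¬ Function.Surjective (l • ContinuousLinearMap.id ℂ X - T)}

/-- The left generalized Drazin spectrum. -/
def sigmaLgD (T : X →L[ℂ] X) : Set ℂ :=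
  {l : ℂ | ¬ LeftGDInvertible (l • ContinuousLinearMap.id ℂ X - T)}

/-- The right generalized Drazin spectrum. -/
def sigmaRgD (T : X →L[ℂ] X) : Set ℂ :=
  {l : ℂ | ¬ RightGDInvertible (l • ContinuousLinearMap.id ℂ X - T)}

/-- The generalized Kato spectrum. -/
def sigmaGK (T : X →L[ℂ] X) : Set ℂ :=
  {l : ℂ | ¬ HasGKD (l • ContinuousLinearMap.id ℂ X - T)}

/-- The set of points where `T` fails to have the SVEP. -/
def svepFailSet (T : X →L[ℂ] X) : Set ℂ := {l : ℂ | ¬ HasSVEPAt T l}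

/-- The adjoint `T*` of `T`, acting on the dual space, `(T* φ) x = φ (T x)`. -/
noncomputable def adjointDual (T : X →L[ℂ] X) :
    StrongDual ℂ X →L[ℂ] StrongDual ℂ X :=
  (ContinuousLinearMap.compL ℂ X X ℂ).flip T

/-- The local resolvent set of `T` at `x`. -/
def localResolvent (T : X →L[ℂ] X) (x : X) : Set ℂ :=
  ⋃₀ {U : Set ℂ | IsOpen U ∧ ∃ f : ℂ → X, AnalyticOnNhd ℂ f U ∧
      ∀ l ∈ U, l • f l - T (f l) = x}

/-- The local spectrum of `T` at `x`. -/
def localSpectrum (T : X →L[ℂ] X) (x : X) : Set ℂ := (localResolvent T x)ᶜ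

/-- The local spectral subspace `X_T(Ω)`. -/
def localSpectralSubspace (T : X →L[ℂ] X) (Ω : Set ℂ) : Set X :=
  {x : X | localSpectrum T x ⊆ Ω}

/-- Dunford's property `(C)`. -/
def HasPropertyC (T : X →L[ℂ] X) : Prop :=
  ∀ Ω : Set ℂ, IsClosed Ω → IsClosed (localSpectralSubspace T Ω)

/-- Bishop's property `(β)`. -/
def HasPropertyBeta (T : X →L[ℂ] X) : Prop :=
  ∀ U : Set ℂ, IsOpen U → ∀ f : ℕ → ℂ → X, (∀ n, AnalyticOnNhd ℂ (f n) U) →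
    (∀ K : Set ℂ, K ⊆ U → IsCompact K →
      TendstoUniformlyOn (fun n l => l • f n l - T (f n l)) (fun _ => 0) atTop K) →
    ∀ K : Set ℂ, K ⊆ U → IsCompact K →
      TendstoUniformlyOn (fun n l => f n l) (fun _ => 0) atTop K

/-- `S` is a generalized Drazin inverse of `T`. -/
def IsGDInverse (T S : X →L[ℂ] X) : Prop :=
  S * T = T * S ∧ S * T * S = S ∧ IsQuasinilpotent (T * S * T - T)

theorem tendsto_rpow_one_div_nhds_zero_iff {a : ℕ → ℝ} (ha : ∀ n, 0 ≤ a n) :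
    Tendsto (fun n : ℕ => a n ^ (1 / (n : ℝ))) atTop (𝓝 0) ↔
      ∀ r : ℝ, 0 ≤ r → Tendsto (fun n => r ^ n * a n) atTop (𝓝 0) := by
  constructor
  · intro h r hr
    set δ := 1 / (2 * (r + 1)) with hδ
    have hδ0 : 0 < δ := by positivity
    have hrδ : r * δ ≤ 1 / 2 := by
      rw [hδ, mul_one_div, div_le_div_iff₀ (by positivity) two_pos]; linarith
    have hle : ∀ᶠ n : ℕ in atTop, a n ≤ δ ^ n := by
      filter_upwards [h.eventually (gt_mem_nhds hδ0), eventually_ne_atTop 0] with n hn hn0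
      calc a n = (a n ^ (1 / (n : ℝ))) ^ n := by
            rw [one_div, Real.rpow_inv_natCast_pow (ha n) hn0]
        _ ≤ δ ^ n := by gcongr; exact Real.rpow_nonneg (ha n) _
    refine squeeze_zero' (.of_forall fun n => mul_nonneg (pow_nonneg hr n) (ha n)) ?_
      (tendsto_pow_atTop_nhds_zero_of_lt_one (by norm_num : (0 : ℝ) ≤ 1 / 2) (by norm_num))
    filter_upwards [hle] with n hn
    calc r ^ n * a n ≤ r ^ n * δ ^ n := by gcongr
      _ = (r * δ) ^ n := (mul_pow r δ n).symm
      _ ≤ (1 / 2) ^ n := by gcongr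
  · intro h
    refine tendsto_order.2
      ⟨fun b hb => .of_forall fun n => hb.trans_le (Real.rpow_nonneg (ha n) _), fun ε hε => ?_⟩
    filter_upwards [(h (2 / ε) (by positivity)).eventually (gt_mem_nhds one_pos),
      eventually_ne_atTop 0] with n hn hn0
    have hbound : a n ≤ (ε / 2) ^ n := calc
      a n = (ε / 2) ^ n * ((2 / ε) ^ n * a n) := by
        rw [← mul_assoc, ← mul_pow, div_mul_div_cancel₀ two_ne_zero, div_self hε.ne', one_pow,
          one_mul]
      _ ≤ (ε / 2) ^ n := mul_le_of_le_one_right (by positivity) hn.le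
    calc a n ^ (1 / (n : ℝ)) ≤ ((ε / 2) ^ n) ^ (1 / (n : ℝ)) := by
          gcongr; exact ha n
      _ = ε / 2 := by rw [one_div, Real.pow_rpow_inv_natCast (by positivity) hn0]
      _ < ε := half_lt_self hε

theorem isQuasinilpotent_iff {A : Y →L[ℂ] Y} :
    IsQuasinilpotent A ↔ ∀ c : ℂ, Tendsto (fun n => c ^ n • A ^ n) atTop (𝓝 0) := by
  rw [IsQuasinilpotent, tendsto_rpow_one_div_nhds_zero_iff fun _ => norm_nonneg _]
  refine ⟨fun h c => ?_, fun h r hr => ?_⟩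
  · simpa [tendsto_zero_iff_norm_tendsto_zero, norm_smul] using h ‖c‖ (norm_nonneg c)
  · simpa [norm_smul, abs_of_nonneg hr] using (h r).norm

theorem mem_quasinilpotentPart_iff {T : Y →L[ℂ] Y} {x : Y} :
    x ∈ quasinilpotentPart T ↔ ∀ c : ℂ, Tendsto (fun n => c ^ n • (T ^ n) x) atTop (𝓝 0) := by
  rw [quasinilpotentPart, mem_ofPred_eq, tendsto_rpow_one_div_nhds_zero_iff fun _ => norm_nonneg _]
  refine ⟨fun h c => ?_, fun h r hr => ?_⟩
  · simpa [tendsto_zero_iff_norm_tendsto_zero, norm_smul] using h ‖c‖ (norm_nonneg c)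
  · simpa [norm_smul, abs_of_nonneg hr] using (h r).norm

theorem apply_mem_quasinilpotentPart {T : Y →L[ℂ] Y} {x : Y} (hx : x ∈ quasinilpotentPart T) :
    T x ∈ quasinilpotentPart T := by
  rw [mem_quasinilpotentPart_iff] at hx ⊢
  intro c
  have hTx := (T.continuous.tendsto 0).comp (hx c)
  rw [map_zero] at hTx
  refine hTx.congr fun n => ?_
  rw [Function.comp_apply, map_smul, ← mul_apply_eq_comp, ← mul_apply_eq_comp, ← pow_succ',
    pow_succ]

theorem mem_quasinilpotentPart_of_pow_apply_eq_zero {T : Y →L[ℂ] Y} {x : Y} {m : ℕ}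
    (hx : (T ^ m) x = 0) : x ∈ quasinilpotentPart T := by
  rw [mem_quasinilpotentPart_iff]
  refine fun c => tendsto_const_nhds.congr' ?_
  filter_upwards [eventually_ge_atTop m] with n hn
  rw [← Nat.sub_add_cancel hn, pow_add T, mul_apply_eq_comp, hx, map_zero, smul_zero]

def quasinilpotentSubmodule (T : Y →L[ℂ] Y) : Submodule ℂ Y where
  carrier := quasinilpotentPart T
  zero_mem' := mem_quasinilpotentPart_of_pow_apply_eq_zero (m := 0) (map_zero _)
  add_mem' {x y} hx hy := by
    rw [mem_quasinilpotentPart_iff] at *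
    simpa using fun c => (hx c).add (hy c)
  smul_mem' z x hx := by
    rw [mem_quasinilpotentPart_iff] at *
    simpa [smul_comm _ z] using fun c => (hx c).const_smul z

theorem isQuasinilpotent_iff_quasinilpotentPart_eq_univ [CompleteSpace Y] {A : Y →L[ℂ] Y} :
    IsQuasinilpotent A ↔ quasinilpotentPart A = univ := by
  simp only [eq_univ_iff_forall, isQuasinilpotent_iff, mem_quasinilpotentPart_iff]
  refine ⟨fun h x c => ?_, fun h c => ?_⟩
  · simpa only [Function.comp_def, ContinuousLinearMap.apply_apply, smul_apply, map_zero] using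
      ((ContinuousLinearMap.apply ℂ Y x).continuous.tendsto 0).comp (h c)
  · obtain ⟨C, hC⟩ := banach_steinhaus (g := fun n => (2 * c) ^ n • A ^ n) fun x =>
      ⟨_, forall_mem_range.1 (h x (2 * c)).norm.bddAbove_range.choose_spec⟩
    refine squeeze_zero_norm (a := fun n : ℕ => (1 / 2) ^ n * C) (fun n => ?_) ?_
    · calc ‖c ^ n • A ^ n‖ = ‖(1 / 2 : ℂ) ^ n • (2 * c) ^ n • A ^ n‖ := by
            rw [smul_smul, ← mul_pow, ← mul_assoc, one_div, inv_mul_cancel₀ two_ne_zero, one_mul]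
        _ = (1 / 2) ^ n * ‖(2 * c) ^ n • A ^ n‖ := by rw [norm_smul, norm_pow]; norm_num
        _ ≤ (1 / 2) ^ n * C := by gcongr; exact hC n
    · simpa using (tendsto_pow_atTop_nhds_zero_of_lt_one (by norm_num : (0 : ℝ) ≤ 1 / 2)
        (by norm_num)).mul_const C

section Restriction

variable {T : Y →L[ℂ] Y} {M : Submodule ℂ Y} (h : ∀ x ∈ M, T x ∈ M)

theorem restrictCLM_pow_apply (n : ℕ) (x : M) :
    ((restrictCLM T M h ^ n) x : Y) = (T ^ n) x := by
  induction n generalizing x with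
  | zero => rfl
  | succ n ih => rw [pow_succ, pow_succ, mul_apply_eq_comp, mul_apply_eq_comp, ih]; rfl

theorem quasinilpotentPart_restrictCLM :
    quasinilpotentPart (restrictCLM T M h) = Subtype.val ⁻¹' quasinilpotentPart T := by
  ext x
  simp only [quasinilpotentPart, mem_preimage, mem_ofPred_eq, Submodule.coe_norm,
    restrictCLM_pow_apply]

theorem image_val_quasinilpotentPart_restrictCLM :
    Subtype.val '' quasinilpotentPart (restrictCLM T M h) = (M : Set Y) ∩ quasinilpotentPart T := by
  rw [quasinilpotentPart_restrictCLM]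
  exact Subtype.image_preimage_coe _ _

theorem quasinilpotentPart_restrictCLM_eq_zero_iff :
    quasinilpotentPart (restrictCLM T M h) = {0} ↔ (M : Set Y) ∩ quasinilpotentPart T = {0} := by
  rw [← image_val_quasinilpotentPart_restrictCLM h]
  refine ⟨fun h0 => by rw [h0, image_singleton]; rfl, fun h0 => ?_⟩
  apply image_injective.2 Subtype.val_injective
  rw [h0, image_singleton]
  rfl

theorem isClosed_range_restrictCLM_iff (hM : IsClosed (M : Set Y)) :
    IsClosed (range (restrictCLM T M h)) ↔ IsClosed (T '' M) := by
  have hrange : range (restrictCLM T M h) = Subtype.val ⁻¹' (T '' M) := by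
    ext x
    exact ⟨fun ⟨y, hy⟩ => ⟨y, y.2, congrArg Subtype.val hy⟩,
      fun ⟨y, hy, hyx⟩ => ⟨⟨y, hy⟩, Subtype.ext hyx⟩⟩
  rw [hrange, hM.isClosedEmbedding_subtypeVal.isClosed_iff_preimage_isClosed
    (by rw [Subtype.range_coe]; exact image_subset_iff.2 h)]
  exact Iff.rfl

theorem isQuasinilpotent_restrictCLM_iff [CompleteSpace Y] (hM : IsClosed (M : Set Y)) :
    IsQuasinilpotent (restrictCLM T M h) ↔ (M : Set Y) ⊆ quasinilpotentPart T := by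
  have := hM.completeSpace_coe
  rw [isQuasinilpotent_iff_quasinilpotentPart_eq_univ, quasinilpotentPart_restrictCLM,
    preimage_eq_univ_iff, Subtype.range_coe]

end Restriction

theorem exists_preimage_norm_le_of_isClosed_range {𝕜 E F : Type*} [NontriviallyNormedField 𝕜]
    [NormedAddCommGroup E] [NormedSpace 𝕜 E] [CompleteSpace E]
    [NormedAddCommGroup F] [NormedSpace 𝕜 F] [CompleteSpace F]
    (f : E →L[𝕜] F) (hf : IsClosed (range f)) :
    ∃ C > 0, ∀ y ∈ range f, ∃ x, f x = y ∧ ‖x‖ ≤ C * ‖y‖ := by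
  have : CompleteSpace (LinearMap.range (f : E →ₗ[𝕜] F)) :=
    (show IsClosed (LinearMap.range (f : E →ₗ[𝕜] F) : Set F) from hf).completeSpace_coe
  obtain ⟨C, hC, hpre⟩ :=
    f.rangeRestrict.exists_preimage_norm_le (f : E →ₗ[𝕜] F).surjective_rangeRestrict
  refine ⟨C, hC, fun y hy => ?_⟩
  obtain ⟨x, hx, hxle⟩ := hpre ⟨y, hy⟩
  exact ⟨x, congrArg Subtype.val hx, hxle⟩

theorem SemiRegular.exists_pow_apply_eq {A : Y →L[ℂ] Y} (hA : SemiRegular A) {C : ℝ} (hC : 0 ≤ C)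
    (hpre : ∀ y ∈ range A, ∃ x, A x = y ∧ ‖x‖ ≤ C * ‖y‖) {u : Y} (hu : A u = 0) (j : ℕ) :
    ∃ w, (A ^ j) w = u ∧ ‖w‖ ≤ C ^ j * ‖u‖ := by
  induction j with
  | zero => exact ⟨u, rfl, by simp⟩
  | succ j ih =>
    obtain ⟨w, hw, hwle⟩ := ih
    have hw_ker : (A ^ (j + 1)) w = 0 := by rw [pow_succ', mul_apply_eq_comp, hw, hu]
    obtain ⟨v, rfl, hvle⟩ := hpre w (hA.2 _ w hw_ker)
    refine ⟨v, by rw [pow_succ, mul_apply_eq_comp, hw], ?_⟩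
    calc ‖v‖ ≤ C * ‖A v‖ := hvle
      _ ≤ C * (C ^ j * ‖u‖) := by gcongr
      _ = C ^ (j + 1) * ‖u‖ := by ring

theorem SemiRegular.injective [CompleteSpace Y] {A : Y →L[ℂ] Y} (hA : SemiRegular A)
    (hH : IsClosed (quasinilpotentPart A)) : Function.Injective A := by
  obtain ⟨C, hC, hpre⟩ := exists_preimage_norm_le_of_isClosed_range A hA.1
  set Q := restrictCLM A (quasinilpotentSubmodule A) fun _ => apply_mem_quasinilpotentPart
  have hQ : IsQuasinilpotent Q := (isQuasinilpotent_restrictCLM_iff _ hH).2 subset_rfl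
  rw [injective_iff_map_eq_zero]
  intro u hu
  have hbound : ∀ j, ‖u‖ ≤ C ^ j * ‖Q ^ j‖ * ‖u‖ := by
    intro j
    obtain ⟨w, hw, hwle⟩ := hA.exists_pow_apply_eq hC.le hpre hu j
    have hwH : w ∈ quasinilpotentSubmodule A :=
      mem_quasinilpotentPart_of_pow_apply_eq_zero (m := j + 1) <| by
        rw [pow_succ', mul_apply_eq_comp, hw, hu]
    calc ‖u‖ = ‖(Q ^ j) ⟨w, hwH⟩‖ := by
          rw [Submodule.coe_norm, show ((Q ^ j) ⟨w, hwH⟩ : Y) = u from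
            (restrictCLM_pow_apply _ j _).trans hw]
      _ ≤ ‖Q ^ j‖ * ‖w‖ := (Q ^ j).le_opNorm _
      _ ≤ _ * (C ^ j * ‖u‖) := by gcongr
      _ = _ := by ring
  have hlim := ((tendsto_rpow_one_div_nhds_zero_iff fun _ => norm_nonneg _).1 hQ C hC.le).mul_const
    ‖u‖
  rw [zero_mul] at hlim
  exact norm_le_zero_iff.1 (ge_of_tendsto' hlim hbound)

theorem quasinilpotentPart_eq_zero_of_injective [CompleteSpace Y] {A : Y →L[ℂ] Y}
    (hinj : Function.Injective A) (hcl : IsClosed (range A)) : quasinilpotentPart A = {0} := by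
  obtain ⟨K, hK⟩ := A.antilipschitz_of_injective_of_isClosed_range hinj hcl
  have hpow : ∀ n x, ‖x‖ ≤ K ^ n * ‖(A ^ n) x‖ := by
    intro n
    induction n with
    | zero => simp
    | succ n ih =>
      intro x
      calc ‖x‖ ≤ K ^ n * ‖(A ^ n) x‖ := ih x
        _ ≤ K ^ n * (K * ‖A ((A ^ n) x)‖) := by gcongr; exact A.bound_of_antilipschitz hK _
        _ = K ^ (n + 1) * ‖(A ^ (n + 1)) x‖ := by rw [pow_succ' A, mul_apply_eq_comp]; ring
  refine eq_singleton_iff_unique_mem.2 ⟨(quasinilpotentSubmodule A).zero_mem, fun x hx => ?_⟩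
  have hlim := (tendsto_rpow_one_div_nhds_zero_iff fun _ => norm_nonneg _).1 hx K K.2
  exact norm_le_zero_iff.1 (ge_of_tendsto' hlim (hpow · x))

theorem SemiRegular.quasinilpotentPart_eq_zero [CompleteSpace Y] {A : Y →L[ℂ] Y}
    (hA : SemiRegular A) (hH : IsClosed (quasinilpotentPart A)) : quasinilpotentPart A = {0} :=
  quasinilpotentPart_eq_zero_of_injective (hA.injective hH) hA.1

theorem LeftGDInvertible.hasGKD {T : X →L[ℂ] X} (hT : LeftGDInvertible T) : HasGKD T := by
  obtain ⟨hH, M, hM, hTM, hTM_closed, hMH, hsum⟩ := hT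
  have hH₀ : quasinilpotentPart (restrictCLM T M hTM) = {0} :=
    (quasinilpotentPart_restrictCLM_eq_zero_iff hTM).2 hMH
  refine ⟨M, quasinilpotentSubmodule T,
    { closedM := hM
      closedN := hH
      invM := hTM
      invN := fun _ => apply_mem_quasinilpotentPart
      compl := ⟨Submodule.disjoint_def.2 fun x hxM hxH => hMH.subset ⟨hxM, hxH⟩,
        Submodule.codisjoint_iff_exists_add_eq.2 fun x => ?_⟩
      semiregM := ⟨(isClosed_range_restrictCLM_iff hTM hM).2 hTM_closed, fun n x hx => ?_⟩
      quasiN := (isQuasinilpotent_restrictCLM_iff _ hH).2 subset_rfl }⟩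
  · obtain ⟨m, hm, h, hh, rfl⟩ := hsum x
    exact ⟨m, h, hm, hh, rfl⟩
  · have hx0 : x = 0 := hH₀.subset (mem_quasinilpotentPart_of_pow_apply_eq_zero hx)
    exact ⟨0, by rw [map_zero, hx0]⟩

theorem IsGKD.leftGDInvertible {T : X →L[ℂ] X} {M N : Submodule ℂ X} (hMN : IsGKD T M N)
    (hH : IsClosed (quasinilpotentPart T)) : LeftGDInvertible T := by
  have := hMN.closedM.completeSpace_coe
  have hNH : (N : Set X) ⊆ quasinilpotentPart T :=
    (isQuasinilpotent_restrictCLM_iff _ hMN.closedN).1 hMN.quasiN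
  have hMH : (M : Set X) ∩ quasinilpotentPart T = {0} := by
    refine (quasinilpotentPart_restrictCLM_eq_zero_iff hMN.invM).1 ?_
    refine hMN.semiregM.quasinilpotentPart_eq_zero ?_
    rw [quasinilpotentPart_restrictCLM]
    exact hH.preimage continuous_subtype_val
  refine ⟨hH, M, hMN.closedM, hMN.invM,
    (isClosed_range_restrictCLM_iff _ hMN.closedM).1 hMN.semiregM.1, hMH, fun x => ?_⟩
  obtain ⟨m, n, hm, hn, rfl⟩ := Submodule.codisjoint_iff_exists_add_eq.1 hMN.compl.codisjoint x
  exact ⟨m, hm, n, hNH hn, rfl⟩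

/-- `T` is left generalized Drazin invertible iff `T` admits a GKD
and `H₀(T)` is closed. -/
theorem left_gd_iff_gkd_h0_closed (T : X →L[ℂ] X) :
    LeftGDInvertible T ↔ HasGKD T ∧ IsClosed (quasinilpotentPart T) :=
  ⟨fun hT => ⟨hT.hasGKD, hT.1⟩, fun ⟨⟨_, _, hMN⟩, hH⟩ => hMN.leftGDInvertible hH⟩

end Paper
end

section
/- Let X be a complex Banach space and T a bounded linear operator on X. Then T is right generalized Drazin invertible if and only if there exists a bounded projection P on X (P² = P) such that TP = PT, T + P is surjective, TP is quasinilpotent, and ker(P) = K(T). -/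
/-!
The projection `P` onto `N` along `K(T)` commutes with `T` because both summands are
`T`-invariant, and `(TP)ⁿ x = Tⁿ (P x)` for `n ≥ 1`, so the quasinilpotent part of `TP` is all
of `X` exactly when `ran P ⊆ H₀(T)`. An operator whose quasinilpotent part is everything has
spectrum `{0}` (Neumann series), hence is quasinilpotent by Gelfand's formula. Surjectivity of
`T + P` combines `T (K(T)) = K(T)` on `ker P` with the invertibility of `1 + TP` on `ran P`.
-/

open Filter Topology Set

namespace Paper

variable {Y : Type*} [NormedAddCommGroup Y] [NormedSpace ℂ Y]

variable {X : Type*} [NormedAddCommGroup X] [NormedSpace ℂ X] [CompleteSpace X]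

section AnalyticCore

variable {T : Y →L[ℂ] Y}

/-- Relaxing the bound `δⁿ ‖x‖` to `C δⁿ` makes closure under `+`, `•` and `T` immediate. -/
theorem mem_analyticCore_iff {x : Y} :
    x ∈ analyticCore T ↔ ∃ u : ℕ → Y, u 0 = x ∧ (∀ n, T (u (n + 1)) = u n) ∧
      ∃ C δ : ℝ, 0 ≤ δ ∧ ∀ n, ‖u n‖ ≤ C * δ ^ n := by
  constructor
  · rintro ⟨u, δ, hδ, hu₁, hu, hbound⟩
    refine ⟨fun n => if n = 0 then x else u n, if_pos rfl, fun n => ?_, ‖x‖, δ, hδ.le,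
      fun n => ?_⟩
    · rcases n with _ | n
      · simpa using hu₁
      · simpa using hu (n + 1) n.succ_pos
    · rcases n with _ | n
      · simp
      · simpa [mul_comm] using hbound (n + 1) n.succ_pos
  · rintro ⟨u, rfl, hu, C, δ, hδ, hbound⟩
    by_cases hx : u 0 = 0
    · rw [hx]
      exact ⟨0, 1, one_pos, by simp, by simp, by simp⟩
    have hx : 0 < ‖u 0‖ := norm_pos_iff.mpr hx
    set c := C / ‖u 0‖
    refine ⟨u, max 1 c * max 1 δ, by positivity, hu 0, fun n _ => hu n, fun n hn => ?_⟩
    have hc : c ≤ max 1 c ^ n :=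
      (le_max_right 1 c).trans (le_self_pow₀ (le_max_left 1 c) (by omega))
    have hδn : δ ^ n ≤ max 1 δ ^ n := pow_le_pow_left₀ hδ (le_max_right 1 δ) n
    calc ‖u n‖ ≤ c * δ ^ n * ‖u 0‖ := by
          rw [mul_right_comm, div_mul_cancel₀ C hx.ne']; exact hbound n
      _ ≤ (max 1 c * max 1 δ) ^ n * ‖u 0‖ := by rw [mul_pow]; gcongr

theorem zero_mem_analyticCore : (0 : Y) ∈ analyticCore T :=
  mem_analyticCore_iff.mpr ⟨0, rfl, by simp, 0, 0, le_rfl, by simp⟩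

theorem add_mem_analyticCore {x y : Y} (hx : x ∈ analyticCore T) (hy : y ∈ analyticCore T) :
    x + y ∈ analyticCore T := by
  obtain ⟨u, rfl, hu, C, δ, hδ, hu_le⟩ := mem_analyticCore_iff.mp hx
  obtain ⟨v, rfl, hv, D, ε, hε, hv_le⟩ := mem_analyticCore_iff.mp hy
  have hC : 0 ≤ C := by simpa using (norm_nonneg _).trans (hu_le 0)
  have hD : 0 ≤ D := by simpa using (norm_nonneg _).trans (hv_le 0)
  refine mem_analyticCore_iff.mpr ⟨u + v, rfl, fun n => by simp [hu, hv], C + D, max δ ε,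
    hδ.trans (le_max_left _ _), fun n => ?_⟩
  have hδn : δ ^ n ≤ max δ ε ^ n := pow_le_pow_left₀ hδ (le_max_left δ ε) n
  have hεn : ε ^ n ≤ max δ ε ^ n := pow_le_pow_left₀ hε (le_max_right δ ε) n
  calc ‖u n + v n‖ ≤ C * δ ^ n + D * ε ^ n :=
        (norm_add_le _ _).trans (add_le_add (hu_le n) (hv_le n))
    _ ≤ (C + D) * max δ ε ^ n := by rw [add_mul]; gcongr

theorem smul_mem_analyticCore (c : ℂ) {x : Y} (hx : x ∈ analyticCore T) :
    c • x ∈ analyticCore T := by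
  obtain ⟨u, rfl, hu, C, δ, hδ, hu_le⟩ := mem_analyticCore_iff.mp hx
  refine mem_analyticCore_iff.mpr ⟨c • u, rfl, fun n => by simp [hu], ‖c‖ * C, δ, hδ,
    fun n => ?_⟩
  simpa [norm_smul, mul_assoc] using mul_le_mul_of_nonneg_left (hu_le n) (norm_nonneg c)

variable (T) in
def analyticCoreSubmodule : Submodule ℂ Y where
  carrier := analyticCore T
  zero_mem' := zero_mem_analyticCore
  add_mem' := add_mem_analyticCore
  smul_mem' := smul_mem_analyticCore

theorem mapsTo_analyticCore : MapsTo T (analyticCore T) (analyticCore T) := by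
  intro x hx
  obtain ⟨u, rfl, hu, C, δ, hδ, hu_le⟩ := mem_analyticCore_iff.mp hx
  refine mem_analyticCore_iff.mpr ⟨fun n => T (u n), rfl, fun n => by simp [hu], ‖T‖ * C, δ, hδ,
    fun n => ?_⟩
  calc ‖T (u n)‖ ≤ ‖T‖ * ‖u n‖ := T.le_opNorm _
    _ ≤ ‖T‖ * C * δ ^ n := by rw [mul_assoc]; gcongr; exact hu_le n

theorem surjOn_analyticCore : SurjOn T (analyticCore T) (analyticCore T) := by
  intro x hx
  obtain ⟨u, rfl, hu, C, δ, hδ, hu_le⟩ := mem_analyticCore_iff.mp hx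
  refine ⟨u 1, mem_analyticCore_iff.mpr ⟨fun n => u (n + 1), rfl, fun n => hu (n + 1), C * δ, δ,
    hδ, fun n => ?_⟩, hu 0⟩
  simpa [pow_succ, mul_assoc, mul_comm δ] using hu_le (n + 1)

end AnalyticCore

section QuasinilpotentPart

theorem eventually_norm_pow_apply_le {Q : Y →L[ℂ] Y} {x : Y} (hx : x ∈ quasinilpotentPart Q)
    {ε : ℝ} (hε : 0 < ε) : ∀ᶠ n : ℕ in atTop, ‖(Q ^ n) x‖ ≤ ε ^ n := by
  filter_upwards [hx.eventually (gt_mem_nhds hε), eventually_ge_atTop 1] with n hn hn₁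
  calc ‖(Q ^ n) x‖ = (‖(Q ^ n) x‖ ^ (1 / (n : ℝ))) ^ n := by
        rw [one_div, Real.rpow_inv_natCast_pow (norm_nonneg _) (by omega)]
    _ ≤ ε ^ n := pow_le_pow_left₀ (by positivity) hn.le n

theorem mem_quasinilpotentPart_of_isQuasinilpotent {Q : Y →L[ℂ] Y} (hQ : IsQuasinilpotent Q)
    (x : Y) : x ∈ quasinilpotentPart Q := by
  have hbound : Tendsto (fun n : ℕ => ‖Q ^ n‖ ^ (1 / (n : ℝ)) * max 1 ‖x‖) atTop (𝓝 0) := by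
    simpa using hQ.mul_const (max 1 ‖x‖)
  refine squeeze_zero' (.of_forall fun n => by positivity) ?_ hbound
  filter_upwards [eventually_ge_atTop 1] with n hn
  calc ‖(Q ^ n) x‖ ^ (1 / (n : ℝ)) ≤ (‖Q ^ n‖ * ‖x‖) ^ (1 / (n : ℝ)) := by
        gcongr; exact (Q ^ n).le_opNorm x
    _ = ‖Q ^ n‖ ^ (1 / (n : ℝ)) * ‖x‖ ^ (1 / (n : ℝ)) :=
        Real.mul_rpow (by positivity) (by positivity)
    _ ≤ ‖Q ^ n‖ ^ (1 / (n : ℝ)) * max 1 ‖x‖ := by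
        gcongr
        rcases le_total ‖x‖ 1 with hx | hx
        · exact (Real.rpow_le_one (norm_nonneg _) hx (by positivity)).trans (le_max_left _ _)
        · refine (Real.rpow_le_self_of_one_le hx ?_).trans (le_max_right _ _)
          rw [div_le_one (Nat.cast_pos.mpr hn)]
          exact_mod_cast hn

theorem summable_pow_smul_pow_apply {Q : X →L[ℂ] X} {x : X} (hx : x ∈ quasinilpotentPart Q)
    (c : ℂ) : Summable fun n : ℕ => c ^ n • (Q ^ n) x := by
  set ε := 1 / (‖c‖ + 1)
  have hr : ‖c‖ * ε < 1 := by
    rw [← div_eq_mul_one_div, div_lt_one (by positivity)]; linarith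
  refine .of_norm_bounded_eventually_nat
    (summable_geometric_of_lt_one (by positivity) hr) ?_
  filter_upwards [eventually_norm_pow_apply_le hx (show 0 < ε by positivity)] with n hn
  rw [norm_smul, norm_pow, mul_pow]
  gcongr

theorem exists_sub_smul_apply_eq {Q : X →L[ℂ] X} {x : X} (hx : x ∈ quasinilpotentPart Q)
    (c : ℂ) : ∃ z, z - c • Q z = x := by
  have hsum := summable_pow_smul_pow_apply hx c
  refine ⟨∑' n : ℕ, c ^ n • (Q ^ n) x, ?_⟩
  have hshift : c • Q (∑' n : ℕ, c ^ n • (Q ^ n) x) =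
      ∑' n : ℕ, c ^ (n + 1) • (Q ^ (n + 1)) x := by
    rw [Q.map_tsum hsum, ← tsum_const_smul'' c]
    congr 1; ext n
    rw [map_smul, smul_smul, pow_succ', pow_succ', mul_apply_eq_comp]
  rw [hshift, hsum.tsum_eq_zero_add]
  simp

end QuasinilpotentPart

section Spectrum

theorem spectrum_subset_zero_of_forall_mem_quasinilpotentPart {Q : X →L[ℂ] X}
    (hQ : ∀ x, x ∈ quasinilpotentPart Q) : spectrum ℂ Q ⊆ {0} := by
  intro l hl
  by_contra hl₀
  have hl₀ : l ≠ 0 := hl₀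
  have happly : ∀ v, (algebraMap ℂ (X →L[ℂ] X) l - Q) v = l • v - Q v := fun v => by
    simp [Algebra.algebraMap_eq_smul_one]
  refine hl (ContinuousLinearMap.isUnit_iff_bijective.mpr ⟨fun a b hab => ?_, fun y => ?_⟩)
  · rw [happly, happly] at hab
    set v := a - b
    have hv : Q v = l • v := by
      rw [map_sub, smul_sub]
      linear_combination (norm := module) (-1 : ℂ) • hab
    have hpow : ∀ n, (Q ^ n) v = l ^ n • v := by
      intro n
      induction n with
      | zero => simp
      | succ n ih => rw [pow_succ', mul_apply_eq_comp, ih, map_smul, hv, smul_smul, pow_succ]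
    -- an eigenvector for `l` makes the Neumann series of `(1 - l⁻¹ Q)⁻¹` constant
    have hsum := summable_pow_smul_pow_apply (hQ v) l⁻¹
    simp only [hpow, smul_smul, ← mul_pow, inv_mul_cancel₀ hl₀, one_pow, one_smul,
      summable_const_iff] at hsum
    exact sub_eq_zero.mp hsum
  · obtain ⟨z, hz⟩ := exists_sub_smul_apply_eq (hQ (l⁻¹ • y)) l⁻¹
    refine ⟨z, ?_⟩
    rw [happly, ← smul_inv_smul₀ hl₀ y, ← hz, smul_sub, smul_inv_smul₀ hl₀]

theorem isQuasinilpotent_of_spectrum_subset_zero {Q : X →L[ℂ] X} (hQ : spectrum ℂ Q ⊆ {0}) :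
    IsQuasinilpotent Q := by
  have hρ : spectralRadius ℂ Q = 0 :=
    nonpos_iff_eq_zero.mp (iSup₂_le fun k hk => by rw [Set.mem_singleton_iff.mp (hQ hk)]; simp)
  have := (ENNReal.tendsto_toReal ENNReal.zero_ne_top).comp
    (hρ ▸ spectrum.pow_norm_pow_one_div_tendsto_nhds_spectralRadius Q)
  exact this.congr fun n => ENNReal.toReal_ofReal (Real.rpow_nonneg (norm_nonneg _) _)

theorem isQuasinilpotent_iff_forall_mem_quasinilpotentPart {Q : X →L[ℂ] X} :
    IsQuasinilpotent Q ↔ ∀ x, x ∈ quasinilpotentPart Q :=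
  ⟨mem_quasinilpotentPart_of_isQuasinilpotent, fun h => isQuasinilpotent_of_spectrum_subset_zero
    (spectrum_subset_zero_of_forall_mem_quasinilpotentPart h)⟩

end Spectrum

theorem _root_.Submodule.isCompl_iff_inter_eq_and_forall_exists_add {R M : Type*} [Ring R]
    [AddCommGroup M] [Module R M] {p q : Submodule R M} :
    IsCompl p q ↔ (p : Set M) ∩ q = {0} ∧ ∀ x, ∃ a ∈ p, ∃ b ∈ q, x = a + b := by
  rw [isCompl_iff, disjoint_iff, Submodule.codisjoint_iff_exists_add_eq, ← SetLike.coe_set_eq,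
    Submodule.coe_inf, Submodule.bot_coe]
  simp only [exists_and_left, eq_comm]

section Projection

theorem mem_quasinilpotentPart_mul_iff {T P : Y →L[ℂ] Y} (hP : IsIdempotentElem P)
    (hTP : Commute T P) (x : Y) :
    x ∈ quasinilpotentPart (T * P) ↔ P x ∈ quasinilpotentPart T := by
  refine tendsto_congr' ?_
  filter_upwards [eventually_ge_atTop 1] with n hn
  obtain ⟨n, rfl⟩ := Nat.exists_eq_add_of_le' hn
  rw [hTP.mul_pow, hP.pow_succ_eq, mul_apply_eq_comp]

theorem commute_projectionL {T : Y →L[ℂ] Y} {p q : Submodule ℂ Y} (h : p.IsTopCompl q)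
    (hp : ∀ x ∈ p, T x ∈ p) (hq : ∀ x ∈ q, T x ∈ q) : Commute T (p.projectionL q h) := by
  have hp' : p ∈ Module.End.invtSubmodule (T : Y →ₗ[ℂ] Y) := hp
  have hq' : q ∈ Module.End.invtSubmodule (T : Y →ₗ[ℂ] Y) := hq
  have hP : IsIdempotentElem (p.projectionL q h : Y →ₗ[ℂ] Y) :=
    ContinuousLinearMap.isIdempotentElem_toLinearMap_iff.mpr
      (Submodule.isIdempotentElem_projectionL h)
  have := (LinearMap.IsIdempotentElem.commute_iff (T := (T : Y →ₗ[ℂ] Y)) hP).mpr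
    ⟨by simpa using hp', by simpa using hq'⟩
  ext x
  exact (LinearMap.congr_fun this.eq x).symm

theorem surjective_add_of_isQuasinilpotent_mul {T P : X →L[ℂ] X} (hP : IsIdempotentElem P)
    (hTP : Commute T P) (hq : IsQuasinilpotent (T * P))
    (hsurj : SurjOn T {x | P x = 0} {x | P x = 0}) : Function.Surjective (T + P) := by
  have hPP : ∀ x, P (P x) = P x := fun x => congr($hP.eq x)
  have hPT : ∀ x, P (T x) = T (P x) := fun x => congr($hTP.eq x).symm
  intro y
  obtain ⟨z, hz⟩ :=
    exists_sub_smul_apply_eq (mem_quasinilpotentPart_of_isQuasinilpotent hq y) (-1)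
  obtain ⟨m, hm : P m = 0, hTm⟩ := hsurj (show P (y - P y) = 0 by rw [map_sub, hPP, sub_self])
  refine ⟨m + P z, ?_⟩
  have hPy : P y = P z + T (P z) := by
    rw [← hz]
    simp only [mul_apply_eq_comp, neg_smul, one_smul, sub_neg_eq_add, map_add, hPT, hPP]
  simp only [add_apply, map_add, hTm, hm, hPP, hPy]
  abel

end Projection

theorem rightGDInvertible_iff {T : Y →L[ℂ] Y} :
    RightGDInvertible T ↔ IsClosed (analyticCore T) ∧ ∃ N : Submodule ℂ Y,
      IsClosed (N : Set Y) ∧ (∀ x ∈ N, T x ∈ N) ∧ (N : Set Y) ⊆ quasinilpotentPart T ∧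
        IsCompl (analyticCoreSubmodule T) N := by
  simp only [RightGDInvertible, Submodule.isCompl_iff_inter_eq_and_forall_exists_add]
  rfl

/-- `T` is right generalized Drazin invertible iff there is a bounded
projection `P` commuting with `T` with `T + P` surjective, `TP` quasinilpotent
and `ker P = K(T)`. -/
theorem right_gd_iff_projection (T : X →L[ℂ] X) :
    RightGDInvertible T ↔
      ∃ P : X →L[ℂ] X, P * P = P ∧ T * P = P * T ∧ Function.Surjective (T + P) ∧
        IsQuasinilpotent (T * P) ∧ {x : X | P x = 0} = analyticCore T := by
  rw [rightGDInvertible_iff]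
  constructor
  · rintro ⟨hK, N, hN, hTN, hNH, hKN⟩
    let h := Submodule.IsCompl.isTopCompl_of_isClosed hKN.symm hN hK
    let P := N.projectionL (analyticCoreSubmodule T) h
    have hP : IsIdempotentElem P := Submodule.isIdempotentElem_projectionL h
    have hTP : Commute T P := commute_projectionL h hTN fun _ => (mapsTo_analyticCore ·)
    have hker : {x | P x = 0} = analyticCore T :=
      Set.ext fun x => Submodule.projectionL_apply_eq_zero_iff h
    have hq : IsQuasinilpotent (T * P) :=
      isQuasinilpotent_iff_forall_mem_quasinilpotentPart.mpr fun x =>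
        (mem_quasinilpotentPart_mul_iff hP hTP x).mpr (hNH (Submodule.projectionL_apply_mem h x))
    exact ⟨P, hP, hTP, surjective_add_of_isQuasinilpotent_mul hP hTP hq
      (hker ▸ surjOn_analyticCore), hq, hker⟩
  · rintro ⟨P, hP, hTP, -, hq, hker⟩
    have hPc := ContinuousLinearMap.IsIdempotentElem.isTopCompl hP
    have hK : analyticCoreSubmodule T = P.ker := SetLike.coe_injective hker.symm
    refine ⟨hker ▸ isClosed_eq P.continuous continuous_const, P.range, hPc.isClosed, ?_, ?_,
      hK ▸ hPc.isCompl.symm⟩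
    · rintro _ ⟨y, rfl⟩
      exact ⟨T y, congr($hTP y).symm⟩
    · rintro _ ⟨y, rfl⟩
      exact (mem_quasinilpotentPart_mul_iff hP hTP y).mp
        (mem_quasinilpotentPart_of_isQuasinilpotent hq y)

end Paper
end

section
/- Let X be a complex Banach space and T an invertible bounded linear operator on X with inverse T⁻¹. Then for every λ ∈ ℂ, λ ∈ σ_lgD(T) if and only if λ ≠ 0 and λ⁻¹ ∈ σ_lgD(T⁻¹). -/
open Filter Topology Set

namespace Paper

variable {Y : Type*} [NormedAddCommGroup Y] [NormedSpace ℂ Y]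

variable {X : Type*} [NormedAddCommGroup X] [NormedSpace ℂ X] [CompleteSpace X]

/-! For `λ ≠ 0` we have `λ⁻¹ - T⁻¹ = -(λ⁻¹ T⁻¹) (λ - T)`, a product of `λ - T` with an invertible
operator commuting with it. Such a factor changes neither the quasinilpotent part nor the
closedness of images, and a complement `M` of `H₀(λ - T)` that is invariant under `λ - T` is
automatically `T⁻¹`-invariant (write `T⁻¹ x = m + h`; then `T h ∈ M ∩ H₀(λ - T) = 0`). So a left
generalized Drazin decomposition for `λ - T` is one for `λ⁻¹ - T⁻¹`, and symmetrically. At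
`λ = 0`, `-T` is invertible, hence has `H₀(-T) = 0` and the decomposition `M = X`. -/

lemma tendsto_rpow_one_div_of_le_pow_mul {u v : ℕ → ℝ} {c : ℝ} (hc : 0 ≤ c)
    (hu : ∀ n, 0 ≤ u n) (hv : ∀ n, 0 ≤ v n) (hle : ∀ᶠ n in atTop, u n ≤ c ^ n * v n)
    (hlim : Tendsto (fun n : ℕ => v n ^ (1 / (n : ℝ))) atTop (𝓝 0)) :
    Tendsto (fun n : ℕ => u n ^ (1 / (n : ℝ))) atTop (𝓝 0) := by
  have hbound : Tendsto (fun n : ℕ => c * v n ^ (1 / (n : ℝ))) atTop (𝓝 0) := by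
    simpa using hlim.const_mul c
  refine squeeze_zero' (.of_forall fun n => Real.rpow_nonneg (hu n) _) ?_ hbound
  filter_upwards [hle, eventually_ne_atTop 0] with n hn hn0
  calc u n ^ (1 / (n : ℝ)) ≤ (c ^ n * v n) ^ (1 / (n : ℝ)) := by gcongr; exact hu n
    _ = c * v n ^ (1 / (n : ℝ)) := by
      rw [Real.mul_rpow (by positivity) (hv n), ← Real.rpow_natCast,
        ← Real.rpow_mul hc, mul_one_div_cancel (Nat.cast_ne_zero.mpr hn0), Real.rpow_one]

lemma isClosed_image_of_isUnit {R M : Type*} [Semiring R] [TopologicalSpace M] [AddCommMonoid M]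
    [Module R M] {C : M →L[R] M} (hC : IsUnit C) {K : Set M} (hK : IsClosed K) :
    IsClosed (C '' K) := by
  obtain ⟨u, rfl⟩ := hC
  exact (ContinuousLinearEquiv.unitsEquiv R M u).toHomeomorph.isClosed_image.mpr hK

lemma mapsTo_of_rightInverse {R E : Type*} [Ring R] [AddCommGroup E] [Module R E]
    {M : Submodule R E} {H : Set E} (hMH : (M : Set E) ∩ H = {0})
    (hsum : ∀ x, ∃ m ∈ M, ∃ h ∈ H, x = m + h) {f g : E →ₗ[R] E}
    (hfg : Function.RightInverse g f) (hf : Function.Injective f)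
    (hfM : MapsTo f M M) (hfH : MapsTo f H H) : MapsTo g M M := by
  intro x hx
  obtain ⟨m, hm, h, hh, hgx⟩ := hsum (g x)
  have hfh : f h ∈ (M : Set E) ∩ H := by
    refine ⟨?_, hfH hh⟩
    have : f h = x - f m := by rw [← hfg x, hgx, map_add, add_sub_cancel_left]
    exact this ▸ M.sub_mem hx (hfM hm)
  rw [hMH, mem_singleton_iff, ← map_zero f] at hfh
  rwa [SetLike.mem_coe, hgx, hf hfh, add_zero]

section

variable {E : Type*} [NormedAddCommGroup E] [NormedSpace ℂ E]

lemma zero_mem_quasinilpotentPart (A : E →L[ℂ] E) : (0 : E) ∈ quasinilpotentPart A := by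
  refine tendsto_const_nhds.congr' ?_
  filter_upwards [eventually_ne_atTop 0] with n hn
  rw [map_zero, norm_zero, Real.zero_rpow (one_div_ne_zero (Nat.cast_ne_zero.mpr hn))]

lemma quasinilpotentPart_one : quasinilpotentPart (1 : E →L[ℂ] E) = {0} := by
  refine Set.eq_singleton_iff_unique_mem.mpr ⟨zero_mem_quasinilpotentPart 1, fun x hx => ?_⟩
  have hx' : Tendsto (fun n : ℕ => ‖x‖ ^ (1 / (n : ℝ))) atTop (𝓝 0) := by
    simpa [quasinilpotentPart] using hx
  by_contra hx0
  have hone : Tendsto (fun n : ℕ => ‖x‖ ^ (1 / (n : ℝ))) atTop (𝓝 1) := by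
    simpa using tendsto_const_nhds.rpow tendsto_one_div_atTop_nhds_zero_nat
      (Or.inl (norm_ne_zero_iff.mpr hx0))
  exact one_ne_zero (tendsto_nhds_unique hone hx')

lemma mapsTo_quasinilpotentPart_of_commute {A D : E →L[ℂ] E} (h : Commute D A) :
    MapsTo D (quasinilpotentPart A) (quasinilpotentPart A) := by
  intro x hx
  refine tendsto_rpow_one_div_of_le_pow_mul (zero_le_one.trans (le_max_right ‖D‖ 1))
    (fun _ => norm_nonneg _) (fun _ => norm_nonneg _) ?_ hx
  filter_upwards [eventually_ne_atTop 0] with n hn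
  calc ‖(A ^ n) (D x)‖ = ‖D ((A ^ n) x)‖ := by
        change ‖(A ^ n * D) x‖ = ‖(D * A ^ n) x‖
        rw [(h.pow_right n).eq]
    _ ≤ ‖D‖ * ‖(A ^ n) x‖ := D.le_opNorm _
    _ ≤ max ‖D‖ 1 ^ n * ‖(A ^ n) x‖ := by
      gcongr
      exact (le_max_left _ _).trans (le_self_pow₀ (le_max_right _ _) hn)

lemma quasinilpotentPart_subset_mul_of_commute {A C : E →L[ℂ] E} (h : Commute C A) :
    quasinilpotentPart A ⊆ quasinilpotentPart (C * A) := by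
  intro x hx
  refine tendsto_rpow_one_div_of_le_pow_mul (norm_nonneg C)
    (fun _ => norm_nonneg _) (fun _ => norm_nonneg _) ?_ hx
  filter_upwards [eventually_ne_atTop 0] with n hn
  calc ‖((C * A) ^ n) x‖ = ‖(C ^ n) ((A ^ n) x)‖ := by rw [h.mul_pow]; rfl
    _ ≤ ‖C ^ n‖ * ‖(A ^ n) x‖ := (C ^ n).le_opNorm _
    _ ≤ ‖C‖ ^ n * ‖(A ^ n) x‖ := by gcongr; exact norm_pow_le' C (Nat.pos_of_ne_zero hn)

lemma quasinilpotentPart_mul_of_commute_of_isUnit {A C : E →L[ℂ] E} (h : Commute C A)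
    (hC : IsUnit C) : quasinilpotentPart (C * A) = quasinilpotentPart A := by
  obtain ⟨u, rfl⟩ := hC
  refine Set.Subset.antisymm ?_ (quasinilpotentPart_subset_mul_of_commute h)
  have hinv : Commute (↑u⁻¹ : E →L[ℂ] E) (u * A) :=
    (Commute.refl (u : E →L[ℂ] E)).units_inv_left.mul_right h.units_inv_left
  simpa [← mul_assoc] using quasinilpotentPart_subset_mul_of_commute hinv

lemma quasinilpotentPart_eq_singleton_zero_of_isUnit {U : E →L[ℂ] E} (hU : IsUnit U) :
    quasinilpotentPart U = {0} := by
  simpa [quasinilpotentPart_one] using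
    quasinilpotentPart_mul_of_commute_of_isUnit (Commute.one_right U) hU

lemma leftGDInvertible_of_isUnit {U : E →L[ℂ] E} (hU : IsUnit U) : LeftGDInvertible U := by
  have hH := quasinilpotentPart_eq_singleton_zero_of_isUnit hU
  refine ⟨hH ▸ isClosed_singleton, ⊤, isClosed_univ, fun _ _ => trivial,
    isClosed_image_of_isUnit hU isClosed_univ, by simp [hH], fun x => ?_⟩
  exact ⟨x, trivial, 0, zero_mem_quasinilpotentPart U, (add_zero x).symm⟩

lemma leftGDInvertible_inv_smul_sub {T S : E →L[ℂ] E} (h1 : T * S = 1) (h2 : S * T = 1)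
    {l : ℂ} (hl : l ≠ 0) (h : LeftGDInvertible (l • (1 : E →L[ℂ] E) - T)) :
    LeftGDInvertible (l⁻¹ • (1 : E →L[ℂ] E) - S) := by
  set A := l • (1 : E →L[ℂ] E) - T
  set C := -(l⁻¹ • S)
  have hfactor : l⁻¹ • 1 - S = C * A := by
    simp only [C, A, neg_mul, mul_sub, smul_mul_assoc, mul_smul_comm, mul_one, h2]
    match_scalars <;> field_simp
  have hC : IsUnit C :=
    (IsUnit.smul (Units.mk0 l⁻¹ (inv_ne_zero hl)) ⟨⟨S, T, h2, h1⟩, rfl⟩).neg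
  have hST : Commute S T := h2.trans h1.symm
  have hCA : Commute C A :=
    (((Commute.one_right S).smul_right l).sub_right hST).smul_left l⁻¹ |>.neg_left
  have hTA : Commute T A := ((Commute.one_right T).smul_right l).sub_right (Commute.refl T)
  have hH : quasinilpotentPart (l⁻¹ • 1 - S) = quasinilpotentPart A := by
    rw [hfactor]
    exact quasinilpotentPart_mul_of_commute_of_isUnit hCA hC
  obtain ⟨hHcl, M, hMcl, hAM, hAMcl, hMH, hsum⟩ := h
  have hTM : MapsTo T M M := fun x hx => by
    have : T x = l • x - A x := by simp [A]
    exact this ▸ M.sub_mem (M.smul_mem l hx) (hAM x hx)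
  have hSM : MapsTo S M M :=
    mapsTo_of_rightInverse (f := (T : E →ₗ[ℂ] E)) hMH hsum
      (fun x => congr($h1 x)) (Function.LeftInverse.injective (g := S) fun x => congr($h2 x))
      hTM (mapsTo_quasinilpotentPart_of_commute hTA)
  refine ⟨hH ▸ hHcl, M, hMcl, fun x hx => ?_, ?_, hH ▸ hMH, hH ▸ hsum⟩
  · have : (l⁻¹ • (1 : E →L[ℂ] E) - S) x = l⁻¹ • x - S x := rfl
    exact this ▸ M.sub_mem (M.smul_mem l⁻¹ hx) (hSM hx)
  · rw [hfactor, show ⇑(C * A) = C ∘ A from rfl, image_comp]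
    exact isClosed_image_of_isUnit hC hAMcl

end

/-- for invertible `T` with inverse `S`, `λ ∈ σ_lgD(T)` iff `λ ≠ 0`
and `λ⁻¹ ∈ σ_lgD(T⁻¹)`. -/
theorem sigmaLgD_inverse (T S : X →L[ℂ] X) (h1 : T * S = 1) (h2 : S * T = 1)
    (l : ℂ) :
    l ∈ sigmaLgD T ↔ l ≠ 0 ∧ l⁻¹ ∈ sigmaLgD S := by
  have hT : IsUnit T := ⟨⟨T, S, h1, h2⟩, rfl⟩
  simp only [sigmaLgD, mem_ofPred_eq, ← ContinuousLinearMap.one_def]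
  constructor
  · intro hlT
    have hl : l ≠ 0 := by
      rintro rfl
      exact hlT (by simpa using leftGDInvertible_of_isUnit hT.neg)
    refine ⟨hl, fun hS => hlT ?_⟩
    simpa using leftGDInvertible_inv_smul_sub h2 h1 (inv_ne_zero hl) hS
  · rintro ⟨hl, hS⟩ hlT
    exact hS (leftGDInvertible_inv_smul_sub h1 h2 hl hlT)

end Paper
end

section
/- Let X be a complex Banach space, T a bounded linear operator on X, and S a generalized Drazin inverse of T (i.e., ST = TS, STS = S, and TST − T is quasinilpotent). Then T has the SVEP if and only if S has the SVEP. -/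
/-!
Away from `0`, `T` and its generalized Drazin inverse `S` have reciprocal eigenvectors:
`S y = λ y` iff `T y = λ⁻¹ y`. For the harder direction, if `T y = λ y` then `y - TSy` is an
eigenvector of the quasinilpotent `TST - T` for the eigenvalue `-λ`, hence zero, so
`y = TSy = λ Sy`. Consequently, if `(λ - S) f(λ) = 0` on an open set `U`, then `μ ↦ f(μ⁻¹)`
solves `(μ - T) g(μ) = 0` on the image of `U \ {0}` under inversion, so the SVEP of `T` forces
`f = 0` on `U \ {0}`, and on `U` by continuity; the same argument works with `S` and `T`
exchanged.
-/

open Filter Topology Set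

namespace Paper

variable {Y : Type*} [NormedAddCommGroup Y] [NormedSpace ℂ Y]

variable {X : Type*} [NormedAddCommGroup X] [NormedSpace ℂ X] [CompleteSpace X]

theorem IsQuasinilpotent.eq_zero_of_apply_eq_smul {Q : Y →L[ℂ] Y} (hQ : IsQuasinilpotent Q)
    {c : ℂ} (hc : c ≠ 0) {x : Y} (hx : Q x = c • x) : x = 0 := by
  by_contra hx0
  have hpow : ∀ n : ℕ, (Q ^ n) x = c ^ n • x := by
    intro n
    induction n with
    | zero => simp
    | succ n ih => rw [pow_succ', mul_apply_eq_comp, ih, map_smul, hx, smul_smul,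
        ← pow_succ]
  have hle : ∀ n : ℕ, ‖c‖ ^ n ≤ ‖Q ^ n‖ := fun n =>
    le_of_mul_le_mul_right (by simpa [hpow n, norm_smul] using (Q ^ n).le_opNorm x)
      (norm_pos_iff.mpr hx0)
  have hroot : ∀ᶠ n : ℕ in atTop, ‖c‖ ≤ ‖Q ^ n‖ ^ (1 / (n : ℝ)) := by
    filter_upwards [eventually_ne_atTop 0] with n hn
    calc ‖c‖ = (‖c‖ ^ n) ^ (1 / (n : ℝ)) := by
          rw [one_div, Real.pow_rpow_inv_natCast (norm_nonneg c) hn]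
      _ ≤ ‖Q ^ n‖ ^ (1 / (n : ℝ)) := Real.rpow_le_rpow (by positivity) (hle n) (by positivity)
  exact hc (norm_le_zero_iff.mp (ge_of_tendsto hQ hroot))

theorem HasSVEP.of_apply_eq_inv_smul {A B : Y →L[ℂ] Y} (hA : HasSVEP A)
    (hAB : ∀ (l : ℂ) (y : Y), l ≠ 0 → B y = l • y → A y = l⁻¹ • y) : HasSVEP B := by
  intro _ U hU _ f hf hBf
  have hoff : EqOn f (fun _ => 0) (U ∩ {0}ᶜ) := by
    rintro l ⟨hl, hl0 : l ≠ 0⟩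
    set V : Set ℂ := {0}ᶜ ∩ (·⁻¹) ⁻¹' U
    have hV : IsOpen V := continuousOn_inv₀.isOpen_inter_preimage isOpen_compl_singleton hU
    have hg : AnalyticOnNhd ℂ (fun μ => f μ⁻¹) V := fun μ hμ =>
      (hf μ⁻¹ hμ.2).comp (analyticAt_id.inv hμ.1)
    have hAg : ∀ μ ∈ V, μ • f μ⁻¹ - A (f μ⁻¹) = 0 := by
      rintro μ ⟨hμ0, hμ⟩
      rw [hAB _ _ (inv_ne_zero hμ0) (sub_eq_zero.mp (hBf _ hμ)).symm, inv_inv, sub_self]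
    have hlV : l⁻¹ ∈ V := ⟨inv_ne_zero hl0, by simpa using hl⟩
    simpa using hA _ V hV hlV _ hg hAg _ hlV
  exact fun l hl => hoff.of_subset_closure hf.continuousOn continuousOn_const inter_subset_left
    ((dense_compl_singleton 0).open_subset_closure_inter hU) hl

namespace IsGDInverse

omit [CompleteSpace X]

variable {T S : X →L[ℂ] X} {l : ℂ} {y : X}

theorem apply_eq_inv_smul_of_gdInverse_apply_eq_smul (h : IsGDInverse T S) (hl : l ≠ 0)
    (hy : S y = l • y) : T y = l⁻¹ • y := by
  have hST : S (T y) = T (S y) := DFunLike.congr_fun h.1 y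
  have hSTy : S (T y) = y := by
    have hSTS : S (T (S y)) = S y := DFunLike.congr_fun h.2.1 y
    rw [hy, map_smul, map_smul] at hSTS
    exact smul_right_injective X hl hSTS
  rw [eq_inv_smul_iff₀ hl, ← map_smul, ← hy, ← hST, hSTy]

theorem gdInverse_apply_eq_inv_smul_of_apply_eq_smul (h : IsGDInverse T S) (hl : l ≠ 0)
    (hy : T y = l • y) : S y = l⁻¹ • y := by
  have hST : ∀ x, S (T x) = T (S x) := fun x => DFunLike.congr_fun h.1 x
  have hSTS : ∀ x, S (T (S x)) = S x := fun x => DFunLike.congr_fun h.2.1 x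
  set z := y - T (S y)
  have hTz : T z = l • z := by
    rw [map_sub, hy, ← hST, hy, map_smul, map_smul, smul_sub]
  have hTSz : T (S z) = 0 := by
    rw [map_sub, hSTS, sub_self, map_zero]
  have hQz : (T * S * T - T) z = (-l) • z := by
    change T (S (T z)) - T z = _
    rw [hTz, map_smul, map_smul, hTSz, smul_zero, zero_sub, neg_smul]
  have hyTS : y = T (S y) :=
    sub_eq_zero.mp (h.2.2.eq_zero_of_apply_eq_smul (neg_ne_zero.mpr hl) hQz)
  rw [eq_inv_smul_iff₀ hl, ← map_smul, ← hy, hST, ← hyTS]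

end IsGDInverse

/-- `T` has the SVEP iff its generalized Drazin inverse `S` has the SVEP. -/
theorem svep_iff_svep_gdInverse (T S : X →L[ℂ] X) (h : IsGDInverse T S) :
    HasSVEP T ↔ HasSVEP S :=
  ⟨fun hT => hT.of_apply_eq_inv_smul fun _ _ hl hy =>
      h.apply_eq_inv_smul_of_gdInverse_apply_eq_smul hl hy,
    fun hS => hS.of_apply_eq_inv_smul fun _ _ hl hy =>
      h.gdInverse_apply_eq_inv_smul_of_apply_eq_smul hl hy⟩

end Paper
end

section
/- Let X be a complex Banach space, T a bounded linear operator on X with the SVEP, and S a generalized Drazin inverse of T (i.e., ST = TS, STS = S, and TST − T is quasinilpotent). Then for every x ∈ X, σ_S(x) \ {0} = {1/λ : λ ∈ σ_T(x) \ {0}}, where σ_T(x) denotes the local spectrum of T at x. -/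
open Filter Topology Set

namespace Paper

variable {Y : Type*} [NormedAddCommGroup Y] [NormedSpace ℂ Y]

variable {X : Type*} [NormedAddCommGroup X] [NormedSpace ℂ X] [CompleteSpace X]

/-! Put `P = TS`, an idempotent commuting with `T` and `S`, and split `x = (1 - P) x + P x`.
On the range of `1 - P` the operator `S` vanishes and `T` acts as the quasinilpotent
`T - TST`, so every `μ ≠ 0` is in both local resolvent sets of `(1 - P) x`. On the range of `P`,
`S` inverts `T`: whenever `B²A² = BA` and `f` solves `l • f l - A (f l) = x` near `μ`, the function
`l ↦ -l⁻¹ • B (A (A (f l⁻¹)))` solves the resolvent equation of `B` at `B (A x)` near `μ⁻¹`.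
Since local resolvent sets are closed under sums, `μ ∈ ρ_T(x) ↔ μ⁻¹ ∈ ρ_S(x)` for `μ ≠ 0`. -/

section GroupWithZero

variable {K : Type*} [GroupWithZero K]

lemma compl_diff_zero_eq_image_one_div {A B : Set K} (h : ∀ μ ≠ 0, μ ∈ A ↔ μ⁻¹ ∈ B) :
    Bᶜ \ {0} = (fun l : K => 1 / l) '' (Aᶜ \ {0}) := by
  ext ν
  constructor
  · rintro ⟨hν, hν0⟩
    refine ⟨ν⁻¹, ⟨fun hA => hν ?_, inv_ne_zero hν0⟩, by simp⟩
    simpa using (h _ (inv_ne_zero hν0)).mp hA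
  · rintro ⟨μ, ⟨hμ, hμ0⟩, rfl⟩
    exact ⟨fun hB => hμ ((h μ hμ0).mpr (by simpa using hB)), by simpa using hμ0⟩

end GroupWithZero

section Ring

variable {R : Type*} [Ring R] {a b : R}

lemma isIdempotentElem_mul_of_mul_mul_eq (hb : b * a * b = b) : IsIdempotentElem (a * b) := by
  rw [IsIdempotentElem, mul_assoc, ← mul_assoc b, hb]

lemma mul_one_sub_mul_eq_zero_of_mul_mul_eq (hb : b * a * b = b) : b * (1 - a * b) = 0 := by
  rw [mul_sub, mul_one, ← mul_assoc, hb, sub_self]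

lemma mul_one_sub_mul_of_commute (hab : Commute a b) : a * (1 - a * b) = -(a * b * a - a) :=
  calc a * (1 - a * b) = a - a * (b * a) := by rw [mul_sub, mul_one, hab.eq]
    _ = -(a * b * a - a) := by rw [mul_assoc, neg_sub]

lemma sq_mul_sq_of_commute (hab : Commute a b) (hb : b * a * b = b) :
    b ^ 2 * a ^ 2 = b * a :=
  calc b ^ 2 * a ^ 2 = b * (b * a) * a := by noncomm_ring
    _ = b * (a * b) * a := by rw [hab.eq]
    _ = b * a := by rw [← mul_assoc, hb]

lemma sq_mul_sq_of_commute' (hab : Commute a b) (hb : b * a * b = b) :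
    a ^ 2 * b ^ 2 = a * b :=
  calc a ^ 2 * b ^ 2 = a * (a * b) * b := by noncomm_ring
    _ = a * (b * a) * b := by rw [hab.eq]
    _ = a * b := by rw [mul_assoc, hb]

end Ring

lemma IsQuasinilpotent.neg {Q : Y →L[ℂ] Y} (hQ : IsQuasinilpotent Q) :
    IsQuasinilpotent (-Q) := by
  refine hQ.congr fun n => ?_
  rcases neg_one_pow_eq_or (Y →L[ℂ] Y) n with h | h <;> simp [neg_pow, h]

lemma IsQuasinilpotent.spectralRadius_eq_zero [CompleteSpace Y] {Q : Y →L[ℂ] Y}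
    (hQ : IsQuasinilpotent Q) : spectralRadius ℂ Q = 0 :=
  tendsto_nhds_unique (spectrum.pow_norm_pow_one_div_tendsto_nhds_spectralRadius Q) <| by
    simpa using ENNReal.tendsto_ofReal hQ

lemma IsQuasinilpotent.mem_resolventSet [CompleteSpace Y] {Q : Y →L[ℂ] Y}
    (hQ : IsQuasinilpotent Q) {μ : ℂ} (hμ : μ ≠ 0) : μ ∈ resolventSet ℂ Q :=
  spectrum.mem_resolventSet_of_spectralRadius_lt <| by
    simpa [hQ.spectralRadius_eq_zero, pos_iff_ne_zero] using hμ

lemma mem_localResolvent_iff {A : Y →L[ℂ] Y} {x : Y} {μ : ℂ} :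
    μ ∈ localResolvent A x ↔
      ∃ f : ℂ → Y, ∀ᶠ l in 𝓝 μ, AnalyticAt ℂ f l ∧ l • f l - A (f l) = x := by
  constructor
  · rintro ⟨U, ⟨hU, f, hf, hfx⟩, hμ⟩
    exact ⟨f, eventually_of_mem (hU.mem_nhds hμ) fun l hl => ⟨hf l hl, hfx l hl⟩⟩
  · rintro ⟨f, hf⟩
    obtain ⟨U, hfU, hU, hμ⟩ := eventually_nhds_iff.mp hf
    exact ⟨U, ⟨hU, f, fun l hl => (hfU l hl).1, fun l hl => (hfU l hl).2⟩, hμ⟩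

lemma resolventSet_subset_localResolvent [CompleteSpace Y] (A : Y →L[ℂ] Y) (x : Y) :
    resolventSet ℂ A ⊆ localResolvent A x := by
  intro μ hμ
  have hR : AnalyticOnNhd ℂ (resolvent A) (resolventSet ℂ A) :=
    DifferentiableOn.analyticOnNhd (fun l hl =>
      (spectrum.hasDerivAt_resolvent_const_left hl).differentiableAt.differentiableWithinAt)
      (spectrum.isOpen_resolventSet A)
  refine mem_localResolvent_iff.mpr ⟨fun l => resolvent A l x, ?_⟩
  filter_upwards [(spectrum.isOpen_resolventSet A).mem_nhds hμ] with l hl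
  refine ⟨((ContinuousLinearMap.apply ℂ Y x).analyticAt _).comp (hR l hl), ?_⟩
  have := congr($(Ring.mul_inverse_cancel _ (spectrum.mem_resolventSet_iff.mp hl)) x)
  simpa [resolvent, Algebra.algebraMap_eq_smul_one] using this

lemma localResolvent_inter_subset_add (A : Y →L[ℂ] Y) (x y : Y) :
    localResolvent A x ∩ localResolvent A y ⊆ localResolvent A (x + y) := by
  rintro μ ⟨hx, hy⟩
  obtain ⟨f, hf⟩ := mem_localResolvent_iff.mp hx
  obtain ⟨g, hg⟩ := mem_localResolvent_iff.mp hy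
  refine mem_localResolvent_iff.mpr ⟨f + g, ?_⟩
  filter_upwards [hf, hg] with l ⟨hfa, hfx⟩ ⟨hga, hgy⟩
  refine ⟨hfa.add hga, ?_⟩
  simp only [Pi.add_apply, smul_add, map_add, ← hfx, ← hgy]
  abel

lemma localResolvent_mul_subset_apply {A E : Y →L[ℂ] Y} (hE : IsIdempotentElem E)
    (hAE : Commute A E) (x : Y) : localResolvent (A * E) x ⊆ localResolvent A (E x) := by
  intro μ hμ
  obtain ⟨f, hf⟩ := mem_localResolvent_iff.mp hμ
  refine mem_localResolvent_iff.mpr ⟨fun l => E (f l), ?_⟩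
  filter_upwards [hf] with l ⟨hfa, hfx⟩
  refine ⟨(E.analyticAt _).comp hfa, ?_⟩
  have hEAE : E * (A * E) = A * E := by rw [← mul_assoc, ← hAE.eq, mul_assoc, hE.eq]
  have hAE_apply : A (E (f l)) = E ((A * E) (f l)) := congr($hEAE (f l)).symm
  rw [hAE_apply, ← map_smul, ← map_sub, hfx]

lemma inv_mem_localResolvent_apply_apply {A B : Y →L[ℂ] Y} (hAB : B ^ 2 * A ^ 2 = B * A)
    {x : Y} {μ : ℂ} (hμ : μ ≠ 0) (hx : μ ∈ localResolvent A x) :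
    μ⁻¹ ∈ localResolvent B (B (A x)) := by
  obtain ⟨f, hf⟩ := mem_localResolvent_iff.mp hx
  refine mem_localResolvent_iff.mpr ⟨fun l => -l⁻¹ • B (A (A (f l⁻¹))), ?_⟩
  have hinv : Tendsto Inv.inv (𝓝 μ⁻¹) (𝓝 μ) := by simpa using tendsto_inv₀ (inv_ne_zero hμ)
  filter_upwards [hinv.eventually hf, eventually_ne_nhds (inv_ne_zero hμ)] with l ⟨hfa, hfx⟩ hl
  have hfinv : AnalyticAt ℂ (fun l => f l⁻¹) l := hfa.comp (analyticAt_inv hl)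
  refine ⟨(analyticAt_inv hl).neg.smul
    ((B.analyticAt _).comp ((A.analyticAt _).comp ((A.analyticAt _).comp hfinv))), ?_⟩
  have hAB_apply (v : Y) : B (B (A (A v))) = B (A v) := congr($hAB v)
  rw [← hfx]
  simp only [map_sub, map_smul, map_neg, smul_neg, neg_smul, smul_smul, mul_inv_cancel₀ hl,
    one_smul, hAB_apply]
  abel

lemma IsGDInverse.mem_localResolvent_iff [CompleteSpace Y] {T S : Y →L[ℂ] Y}
    (h : IsGDInverse T S) (x : Y) {μ : ℂ} (hμ : μ ≠ 0) :
    μ ∈ localResolvent T x ↔ μ⁻¹ ∈ localResolvent S x := by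
  obtain ⟨hST, hSTS, hq⟩ := h
  have hTS : Commute T S := hST.symm
  set E := 1 - T * S
  have hE : IsIdempotentElem E := (isIdempotentElem_mul_of_mul_mul_eq hSTS).one_sub
  have hx : x = E x + T (S x) := by simp [E]
  constructor
  · intro hT
    rw [hx]
    refine localResolvent_inter_subset_add S _ _ ⟨?_, ?_⟩
    · refine localResolvent_mul_subset_apply hE
        ((Commute.one_right S).sub_right (hTS.symm.mul_right (Commute.refl S))) x
        (resolventSet_subset_localResolvent _ x ?_)
      rw [mul_one_sub_mul_eq_zero_of_mul_mul_eq hSTS, spectrum.mem_resolventSet_iff, sub_zero]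
      exact (isUnit_iff_ne_zero.mpr (inv_ne_zero hμ)).map _
    · rw [← show S (T x) = T (S x) from congr($hST x)]
      exact inv_mem_localResolvent_apply_apply (sq_mul_sq_of_commute hTS hSTS) hμ hT
  · intro hS
    rw [hx]
    refine localResolvent_inter_subset_add T _ _ ⟨?_, ?_⟩
    · refine localResolvent_mul_subset_apply hE
        ((Commute.one_right T).sub_right ((Commute.refl T).mul_right hTS)) x
        (resolventSet_subset_localResolvent _ x ?_)
      rw [mul_one_sub_mul_of_commute hTS]
      exact hq.neg.mem_resolventSet hμ
    · simpa using inv_mem_localResolvent_apply_apply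
        (sq_mul_sq_of_commute' hTS hSTS) (inv_ne_zero hμ) hS

theorem localSpectrum_gdInverse_general (T S : X →L[ℂ] X)
    (h : IsGDInverse T S) (x : X) :
    localSpectrum S x \ {0} = (fun l : ℂ => 1 / l) '' (localSpectrum T x \ {0}) :=
  compl_diff_zero_eq_image_one_div fun _ hμ => h.mem_localResolvent_iff x hμ

/-- if `T` has the SVEP and `S` is a generalized Drazin inverse of `T`,
then for all `x`, `σ_S(x) \ {0} = {1/λ : λ ∈ σ_T(x) \ {0}}`. -/
theorem localSpectrum_gdInverse (T S : X →L[ℂ] X) (hT : HasSVEP T)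
    (h : IsGDInverse T S) (x : X) :
    localSpectrum S x \ {0} = (fun l : ℂ => 1 / l) '' (localSpectrum T x \ {0}) :=
  localSpectrum_gdInverse_general T S h x

end Paper
end
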